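/- Let μ_t be a finite Borel measure on S^d satisfying a‖f‖²_{L²(S^d)} ≤ ∫_{S^d}|f|² dμ_t for all f ∈ Π_t, and let r ∈ (0, π/2]. If supp μ_t ⊆ B_r(x) for some x ∈ S^d, then (sin r)^{2t} ≥ (a/μ_t(S^d)) · Λ_{d,t}. -/

import Mathlib

set_option maxHeartbeats 1000000


open MeasureTheory Real
open scoped RealInnerProductSpace

noncomputable section

abbrev Sph (d : ℕ) : Type := Metric.sphere (0 : EuclideanSpace ℝ (Fin (d+1))) 1

/-- The normalized surface measure on the sphere `S^d`. -/
noncomputable def surf (d : ℕ) : Measure (Sph d) :=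
  (μH[(d:ℝ)] (Set.univ : Set (Sph d)))⁻¹ • μH[(d:ℝ)]

/-- Evaluation of polynomials in `d+1` variables on the sphere, as a linear map. -/
noncomputable def evalL (d : ℕ) : MvPolynomial (Fin (d+1)) ℝ →ₗ[ℝ] (Sph d → ℝ) where
  toFun p := fun x => MvPolynomial.eval (fun i => (x : EuclideanSpace ℝ (Fin (d+1))) i) p
  map_add' p q := by funext x; simp
  map_smul' c p := by funext x; simp

/-- The space `Π_t` of spherical polynomials of degree at most `t` on `S^d`. -/
noncomputable def Pit (d t : ℕ) : Submodule ℝ (Sph d → ℝ) :=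
  (MvPolynomial.restrictTotalDegree (Fin (d+1)) ℝ t).map (evalL d)

/-- The dimension of `Π_t`. -/
def dimP (d t : ℕ) : ℕ := (d+t).choose t + (d+t-1).choose (t-1)

/-- The spherical cap of radius `r` about `x`. -/
def cap (d : ℕ) (x : Sph d) (r : ℝ) : Set (Sph d) :=
  {y | Real.cos r ≤ (inner ℝ (x : EuclideanSpace ℝ (Fin (d+1))) (y : EuclideanSpace ℝ (Fin (d+1))) : ℝ)}

/-! ### Auxiliary lemmas -/

lemma surf_univ_le_one (d : ℕ) : surf d Set.univ ≤ 1 := by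
  unfold surf
  rw [Measure.smul_apply, smul_eq_mul]
  rcases eq_or_ne (μH[(d:ℝ)] (Set.univ : Set (Sph d))) 0 with h | h
  · simp [h]
  rcases eq_or_ne (μH[(d:ℝ)] (Set.univ : Set (Sph d))) ⊤ with h' | h'
  · simp [h']
  · rw [ENNReal.inv_mul_cancel h h']

instance surf_isFiniteMeasure (d : ℕ) : IsFiniteMeasure (surf d) :=
  ⟨lt_of_le_of_lt (surf_univ_le_one d) ENNReal.one_lt_top⟩

lemma integrable_of_continuous {d : ℕ} (ν : Measure (Sph d)) [IsFiniteMeasure ν]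
    {g : Sph d → ℝ} (hg : Continuous g) : Integrable g ν :=
  hg.integrable_of_hasCompactSupport (HasCompactSupport.of_compactSpace g)

/-- The isometry of the sphere induced by a linear isometry of the ambient space. -/
noncomputable def sphMap (d : ℕ)
    (T : EuclideanSpace ℝ (Fin (d+1)) ≃ₗᵢ[ℝ] EuclideanSpace ℝ (Fin (d+1))) :
    Sph d ≃ᵢ Sph d where
  toFun y := ⟨T y, by
    rw [mem_sphere_zero_iff_norm, T.norm_map]
    exact mem_sphere_zero_iff_norm.mp y.2⟩
  invFun y := ⟨T.symm y, by
    rw [mem_sphere_zero_iff_norm, T.symm.norm_map]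
    exact mem_sphere_zero_iff_norm.mp y.2⟩
  left_inv y := Subtype.ext (T.symm_apply_apply y)
  right_inv y := Subtype.ext (T.apply_symm_apply y)
  isometry_toFun := Isometry.of_dist_eq fun a b => by
    rw [Subtype.dist_eq, Subtype.dist_eq]
    exact T.dist_map a b

lemma sphMap_coe {d : ℕ} (T : EuclideanSpace ℝ (Fin (d+1)) ≃ₗᵢ[ℝ] EuclideanSpace ℝ (Fin (d+1)))
    (y : Sph d) : ((sphMap d T y : Sph d) : EuclideanSpace ℝ (Fin (d+1))) = T y := rfl

lemma integral_comp_sphMap (d : ℕ)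
    (T : EuclideanSpace ℝ (Fin (d+1)) ≃ₗᵢ[ℝ] EuclideanSpace ℝ (Fin (d+1)))
    (g : Sph d → ℝ) :
    ∫ y, g (sphMap d T y) ∂(surf d) = ∫ y, g y ∂(surf d) := by
  have h1 : MeasurePreserving (sphMap d T) (surf d) (surf d) := by
    refine ⟨(sphMap d T).continuous.measurable, ?_⟩
    unfold surf
    rw [Measure.map_smul, (sphMap d T).map_hausdorffMeasure]
  exact h1.integral_comp (sphMap d T).toHomeomorph.measurableEmbedding g

lemma mem_Pit (d t s : ℕ) (hs : s ≤ t) (e : EuclideanSpace ℝ (Fin (d+1))) (c : ℝ) :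
    (fun y : Sph d => ((inner ℝ e (y : EuclideanSpace ℝ (Fin (d+1))) : ℝ) + c)^s) ∈ Pit d t := by
  classical
  refine Submodule.mem_map.mpr
    ⟨((∑ i, MvPolynomial.C (e i) * MvPolynomial.X i) + MvPolynomial.C c)^s, ?_, ?_⟩
  · rw [MvPolynomial.mem_restrictTotalDegree]
    refine le_trans (MvPolynomial.totalDegree_pow _ _) ?_
    have h1 : ((∑ i, MvPolynomial.C (e i) * MvPolynomial.X i) +
        MvPolynomial.C c : MvPolynomial (Fin (d+1)) ℝ).totalDegree ≤ 1 := by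
      refine le_trans (MvPolynomial.totalDegree_add _ _) (max_le ?_ ?_)
      · refine le_trans (MvPolynomial.totalDegree_finset_sum _ _)
          (Finset.sup_le fun i _ => ?_)
        refine le_trans (MvPolynomial.totalDegree_mul _ _) ?_
        simp [MvPolynomial.totalDegree_C, MvPolynomial.totalDegree_X]
      · simp [MvPolynomial.totalDegree_C]
    calc s * ((∑ i, MvPolynomial.C (e i) * MvPolynomial.X i) +
          MvPolynomial.C c : MvPolynomial (Fin (d+1)) ℝ).totalDegree
        ≤ s * 1 := Nat.mul_le_mul_left s h1
      _ = s := Nat.mul_one s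
      _ ≤ t := hs
  · funext y
    simp [evalL, PiLp.inner_apply, RCLike.inner_apply, conj_trivial]
    simp [mul_comm]

theorem support_lemma (d t : ℕ) (μ : Measure (Sph d)) [IsFiniteMeasure μ] (a : ℝ)
    (hMZ : ∀ f ∈ Pit d t, a * ∫ y, (f y)^2 ∂(surf d) ≤ ∫ y, (f y)^2 ∂μ)
    (r : ℝ) (hr : r ∈ Set.Ioc 0 (π/2)) (x : Sph d)
    (hsupp : μ ((cap d x r)ᶜ) = 0) :
    (a / (μ Set.univ).toReal) * (∫ y, (inner ℝ (x : EuclideanSpace ℝ (Fin (d+1))) (y : EuclideanSpace ℝ (Fin (d+1))) : ℝ)^(2*t) ∂(surf d))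
      ≤ (Real.sin r)^(2*t) := by
  obtain ⟨hr0, hr2⟩ := hr
  have hpi : r < π := lt_of_le_of_lt hr2 (by linarith [pi_pos])
  have hRHS : (0:ℝ) ≤ Real.sin r ^ (2*t) := by
    have := Real.sin_pos_of_pos_of_lt_pi hr0 hpi
    positivity
  set m : ℝ := (μ Set.univ).toReal with hm_def
  have hm0 : (0:ℝ) ≤ m := ENNReal.toReal_nonneg
  rcases eq_or_lt_of_le hm0 with hm | hm
  · rw [← hm, div_zero, zero_mul]; exact hRHS
  have hcos : 0 ≤ Real.cos r := Real.cos_nonneg_of_mem_Icc ⟨by linarith, hr2⟩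
  have hxnorm : ‖(x : EuclideanSpace ℝ (Fin (d+1)))‖ = 1 := mem_sphere_zero_iff_norm.mp x.2
  -- the constant function 1 belongs to `Pit d t`
  have hone : (fun _ : Sph d => (1:ℝ)) ∈ Pit d t := by
    have := mem_Pit d t 0 (Nat.zero_le t) 0 1
    simpa using this
  rcases Nat.eq_zero_or_pos t with ht | ht
  · -- case t = 0
    subst ht
    simp only [Nat.mul_zero, pow_zero]
    have h1 := hMZ _ hone
    simp only [one_pow] at h1
    rw [integral_const, integral_const, smul_eq_mul, smul_eq_mul, mul_one, mul_one] at h1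
    rw [integral_const, smul_eq_mul, mul_one]
    rw [div_mul_eq_mul_div, div_le_one hm]
    exact h1
  rcases Nat.eq_zero_or_pos d with hd | hd
  · -- case d = 0 (one-dimensional ambient space)
    subst hd
    have hsq : ∀ y : Sph 0, (inner ℝ (x : EuclideanSpace ℝ (Fin 1)) (y : EuclideanSpace ℝ (Fin 1)) : ℝ)^2 = 1 := by
      intro y
      have hx : (inner ℝ (x : EuclideanSpace ℝ (Fin 1)) (x : EuclideanSpace ℝ (Fin 1)) : ℝ) = 1 := by
        rw [real_inner_self_eq_norm_sq, hxnorm, one_pow]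
      have hy : (inner ℝ (y : EuclideanSpace ℝ (Fin 1)) (y : EuclideanSpace ℝ (Fin 1)) : ℝ) = 1 := by
        rw [real_inner_self_eq_norm_sq, mem_sphere_zero_iff_norm.mp y.2, one_pow]
      simp only [PiLp.inner_apply, RCLike.inner_apply, conj_trivial, Fin.sum_univ_succ,
        Finset.univ_eq_empty, Finset.sum_empty, add_zero] at hx hy ⊢
      linear_combination ((y : EuclideanSpace ℝ (Fin 1)) 0 * (y : EuclideanSpace ℝ (Fin 1)) 0) * hx + hy
    have hinner1 : ∀ y ∈ cap 0 x r,
        (inner ℝ (x : EuclideanSpace ℝ (Fin 1)) (y : EuclideanSpace ℝ (Fin 1)) : ℝ) = 1 := by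
      intro y hy
      have h1 := hsq y
      have h2 : Real.cos r ≤ (inner ℝ (x : EuclideanSpace ℝ (Fin 1)) (y : EuclideanSpace ℝ (Fin 1)) : ℝ) := hy
      nlinarith
    set g : Sph 0 → ℝ := fun y => (inner ℝ (x : EuclideanSpace ℝ (Fin 1)) (y : EuclideanSpace ℝ (Fin 1)) : ℝ) with hg_def
    have hg_cont : Continuous g := (continuous_const.inner continuous_subtype_val)
    -- the integrand is identically 1
    have hΛ : ∫ y, (g y)^(2*t) ∂(surf 0) = ∫ _, (1:ℝ) ∂(surf 0) := by
      refine integral_congr_ae (Filter.Eventually.of_forall fun y => ?_)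
      show g y ^ (2*t) = 1
      rw [pow_mul]
      show ((inner ℝ (x : EuclideanSpace ℝ (Fin 1)) (y : EuclideanSpace ℝ (Fin 1)) : ℝ)^2)^t = 1
      rw [hsq y, one_pow]
    set S : ℝ := (surf 0 Set.univ).toReal with hS_def
    have hS0 : 0 ≤ S := ENNReal.toReal_nonneg
    -- I = ∫ g = 0 by the antipodal isometry
    have hI : ∫ y, g y ∂(surf 0) = 0 := by
      have h1 := integral_comp_sphMap 0 (LinearIsometryEquiv.neg ℝ) g
      have h2 : ∀ y : Sph 0, g (sphMap 0 (LinearIsometryEquiv.neg ℝ) y) = - g y := by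
        intro y
        simp [hg_def, sphMap_coe, inner_neg_right]
      simp only [h2] at h1
      rw [integral_neg] at h1
      linarith
    -- the test function f = g - 1
    set f : Sph 0 → ℝ := fun y => g y - 1 with hf_def
    have hf_mem : f ∈ Pit 0 t := by
      have := mem_Pit 0 t 1 ht (x : EuclideanSpace ℝ (Fin 1)) (-1)
      simpa [hf_def, hg_def, sub_eq_add_neg] using this
    have hf_sq : ∀ y : Sph 0, (f y)^2 = 2 - 2 * g y := by
      intro y
      have := hsq y
      simp only [hf_def]
      nlinarith
    have hfs : ∫ y, (f y)^2 ∂(surf 0) = 2 * S := by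
      calc ∫ y, (f y)^2 ∂(surf 0) = ∫ y, (2 - 2 * g y) ∂(surf 0) := by
            exact integral_congr_ae (Filter.Eventually.of_forall fun y => hf_sq y)
        _ = (∫ _, (2:ℝ) ∂(surf 0)) - ∫ y, 2 * g y ∂(surf 0) := by
            refine integral_sub (integrable_const 2) ?_
            exact integrable_of_continuous _ (continuous_const.mul hg_cont)
        _ = 2 * S := by
            rw [integral_const, integral_const_mul, hI, smul_eq_mul, measureReal_def, ← hS_def]
            ring
    have hfμ : ∫ y, (f y)^2 ∂μ = 0 := by
      have hz : (fun y => (f y)^2) =ᵐ[μ] 0 := by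
        rw [Filter.EventuallyEq, ae_iff]
        refine measure_mono_null (fun y hy => ?_) hsupp
        simp only [Set.mem_setOf_eq, Pi.zero_apply] at hy
        intro hcap
        have hgy : g y = 1 := hinner1 y hcap
        exact hy (by simp [hf_def, hgy])
      rw [integral_congr_ae hz]
      simp
    have hchain := hMZ f hf_mem
    rw [hfs, hfμ] at hchain
    have hgoal : ∫ y, (g y)^(2*t) ∂(surf 0) = S := by
      rw [hΛ, integral_const, smul_eq_mul, mul_one, measureReal_def]
    rw [hgoal]
    rcases le_or_gt a 0 with ha | ha
    · have h1 : a / m ≤ 0 := div_nonpos_of_nonpos_of_nonneg ha hm0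
      exact le_trans (mul_nonpos_of_nonpos_of_nonneg h1 hS0) hRHS
    · have hSz : S = 0 := by nlinarith
      rw [hSz, mul_zero]; exact hRHS
  · -- main case d ≥ 1
    set x0 : EuclideanSpace ℝ (Fin (d+1)) := (x : EuclideanSpace ℝ (Fin (d+1))) with hx0_def
    have hx0 : x0 ≠ 0 := by
      intro h
      rw [h] at hxnorm
      simp at hxnorm
    haveI : Fact (Module.finrank ℝ (EuclideanSpace ℝ (Fin (d+1))) = d + 1) :=
      ⟨finrank_euclideanSpace_fin⟩
    set B := OrthonormalBasis.fromOrthogonalSpanSingleton (𝕜 := ℝ) d hx0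
    set e0 := B ⟨0, hd⟩ with he0_def
    set e : EuclideanSpace ℝ (Fin (d+1)) := (e0 : EuclideanSpace ℝ (Fin (d+1))) with he_def
    have he_norm : ‖e‖ = 1 := by
      have := B.orthonormal.1 ⟨0, hd⟩
      rw [he_def, he0_def]
      exact this
    have hxe : (inner ℝ x0 e : ℝ) = 0 := by
      have h1 : (e0 : EuclideanSpace ℝ (Fin (d+1))) ∈ (ℝ ∙ x0)ᗮ := e0.2
      exact (Submodule.mem_orthogonal_singleton_iff_inner_right).mp h1
    set T := Submodule.reflection (ℝ ∙ (e - x0))ᗮ with hT_def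
    have hTe : T e = x0 := Submodule.reflection_sub (by rw [he_norm, hxnorm])
    -- the test function
    set f : Sph d → ℝ := fun y => (inner ℝ e (y : EuclideanSpace ℝ (Fin (d+1))) : ℝ)^t with hf_def
    have hf_mem : f ∈ Pit d t := by
      have := mem_Pit d t t le_rfl e 0
      simpa [hf_def] using this
    -- ∫ f² dsurf = Λ by rotation invariance
    have hkey : ∫ y, (f y)^2 ∂(surf d) = ∫ y, (inner ℝ x0 (y : EuclideanSpace ℝ (Fin (d+1))) : ℝ)^(2*t) ∂(surf d) := by
      have h1 := integral_comp_sphMap d T (fun y => (inner ℝ x0 (y : EuclideanSpace ℝ (Fin (d+1))) : ℝ)^(2*t))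
      have h2 : ∀ y : Sph d, (inner ℝ x0 ((sphMap d T y : Sph d) : EuclideanSpace ℝ (Fin (d+1))) : ℝ)^(2*t)
          = (f y)^2 := by
        intro y
        rw [sphMap_coe, ← hTe, T.inner_map_map, hf_def]
        rw [← pow_mul, mul_comm]
      simp only [h2] at h1
      exact h1
    -- bound on the cap
    have hcap_bound : ∀ y : Sph d, y ∈ cap d x r → (f y)^2 ≤ Real.sin r ^ (2*t) := by
      intro y hy
      set c : ℝ := (inner ℝ x0 (y : EuclideanSpace ℝ (Fin (d+1))) : ℝ) with hc_def
      have hc : Real.cos r ≤ c := hy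
      have hc0 : 0 ≤ c := le_trans hcos hc
      set z : EuclideanSpace ℝ (Fin (d+1)) := (y : EuclideanSpace ℝ (Fin (d+1))) - c • x0 with hz_def
      have hynorm : ‖(y : EuclideanSpace ℝ (Fin (d+1)))‖ = 1 := mem_sphere_zero_iff_norm.mp y.2
      have hxe' : (inner ℝ e x0 : ℝ) = 0 := by rw [real_inner_comm]; exact hxe
      have h1 : (inner ℝ e (y : EuclideanSpace ℝ (Fin (d+1))) : ℝ) = (inner ℝ e z : ℝ) := by
        rw [hz_def, inner_sub_right, real_inner_smul_right, hxe']
        ring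
      have h2 : (inner ℝ e z : ℝ)^2 ≤ ‖z‖^2 := by
        have := abs_real_inner_le_norm e z
        rw [he_norm, one_mul] at this
        calc (inner ℝ e z : ℝ)^2 = |(inner ℝ e z : ℝ)|^2 := (sq_abs _).symm
          _ ≤ ‖z‖^2 := by
              exact pow_le_pow_left₀ (abs_nonneg _) this 2
      have h3 : ‖z‖^2 = 1 - c^2 := by
        rw [hz_def, norm_sub_sq_real, hynorm, real_inner_smul_right, real_inner_comm,
          hc_def, norm_smul, hxnorm]
        simp [mul_pow, sq_abs]
        ring
      have h4 : Real.cos r ^ 2 ≤ c^2 := pow_le_pow_left₀ hcos hc 2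
      have h5 : (inner ℝ e (y : EuclideanSpace ℝ (Fin (d+1))) : ℝ)^2 ≤ Real.sin r ^ 2 := by
        have hsc := Real.sin_sq_add_cos_sq r
        rw [h1]
        nlinarith
      calc (f y)^2 = ((inner ℝ e (y : EuclideanSpace ℝ (Fin (d+1))) : ℝ)^2)^t := by
            rw [hf_def, ← pow_mul, ← pow_mul, mul_comm]
        _ ≤ (Real.sin r ^ 2)^t := pow_le_pow_left₀ (sq_nonneg _) h5 t
        _ = Real.sin r ^ (2*t) := by rw [← pow_mul]
    -- a.e. bound with respect to μ
    have hmono : ∫ y, (f y)^2 ∂μ ≤ Real.sin r ^ (2*t) * m := by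
      have hae : (fun y => (f y)^2) ≤ᵐ[μ] fun _ => Real.sin r ^ (2*t) := by
        rw [Filter.EventuallyLE, ae_iff]
        refine measure_mono_null (fun y hy => ?_) hsupp
        simp only [Set.mem_setOf_eq, not_le] at hy
        intro hcap
        exact absurd (hcap_bound y hcap) (not_le.mpr hy)
      have hf_cont : Continuous fun y : Sph d => (f y)^2 := by
        exact ((continuous_const.inner continuous_subtype_val).pow t).pow 2
      calc ∫ y, (f y)^2 ∂μ ≤ ∫ _, Real.sin r ^ (2*t) ∂μ :=
            integral_mono_ae (integrable_of_continuous μ hf_cont) (integrable_const _) hae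
        _ = Real.sin r ^ (2*t) * m := by rw [integral_const, smul_eq_mul, mul_comm, measureReal_def]
    have hchain := hMZ f hf_mem
    rw [hkey] at hchain
    rw [div_mul_eq_mul_div, div_le_iff₀ hm]
    calc a * ∫ y, (inner ℝ x0 (y : EuclideanSpace ℝ (Fin (d+1))) : ℝ)^(2*t) ∂(surf d)
        ≤ ∫ y, (f y)^2 ∂μ := hchain
      _ ≤ Real.sin r ^ (2*t) * m := hmono
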